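/- arXiv:1907.08450 — 6 statements merged into one kernel-verified Lean document; each statement's English description precedes it below -/
import Mathlib

section
/- Let k_1,…,k_n ≥ 2 be integers. Define four sequences by: T_1 = k_1, A_1 = k_1 − 1, B_1 = k_1 − 1, C_1 = k_1 − 2, and for i ≥ 2: T_i = (k_i−1)T_{i-1} + B_{i-1}, B_i = (k_i−2)T_{i-1} + B_{i-1}, A_i = (k_i−1)A_{i-1} + C_{i-1}, C_i = (k_i−2)A_{i-1} + C_{i-1}. Then A_n·B_n − T_n·C_n = 1 for all n ≥ 1. -/
theorem stmt_2 (k T A B C : ℕ → ℤ) (hk : ∀ i, 2 ≤ k i)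
    (hT1 : T 1 = k 1) (hA1 : A 1 = k 1 - 1) (hB1 : B 1 = k 1 - 1) (hC1 : C 1 = k 1 - 2)
    (hT : ∀ i, 2 ≤ i → T i = (k i - 1) * T (i - 1) + B (i - 1))
    (hB : ∀ i, 2 ≤ i → B i = (k i - 2) * T (i - 1) + B (i - 1))
    (hA : ∀ i, 2 ≤ i → A i = (k i - 1) * A (i - 1) + C (i - 1))
    (hC : ∀ i, 2 ≤ i → C i = (k i - 2) * A (i - 1) + C (i - 1)) :
    ∀ n, 1 ≤ n → A n * B n - T n * C n = 1 := by
  intro n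
  induction n with
  | zero => intro h; omega
  | succ m ih =>
    intro _
    rcases Nat.lt_or_ge m 1 with h | h
    · have h0 : m = 0 := by omega
      subst h0; rw [hA1, hB1, hT1, hC1]; ring
    · have hm : 1 ≤ m := by omega
      have h2 : 2 ≤ m + 1 := by omega
      have ihm := ih hm
      have e : m + 1 - 1 = m := rfl
      rw [hA (m+1) h2, hB (m+1) h2, hT (m+1) h2, hC (m+1) h2, e]
      nlinarith [ihm]
end

section
/- Let a_1,…,a_t be positive integers and define m(a) to be the largest number l such that some l of the a_i have a common divisor greater than 1 (and m(a) = 1 if the a_i are pairwise coprime but not all 1). For 0 ≤ k ≤ t−2, let d_k = gcd of all products of k distinct entries (d_0 = 1). Then max{ i : d_i = 1, 0 ≤ i ≤ t−2 } = t − m(a), provided m(a) ≥ 2. -/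
/-!
If a prime `p` divides the `k`-fold gcd `d_k`, then every `k`-subset contains an index `i`
with `p ∣ a i`, so fewer than `k` entries avoid `p` and more than `t - k` entries share the
divisor `p`; by maximality of `m` this forces `d_{t-m} = 1`. Conversely, a set `S` of `m`
entries with `gcd > 1` meets every `k`-subset once `k > t - m`, so `gcd S ∣ d_k`.
-/

namespace Finset

variable {ι α : Type*} [CommMonoidWithZero α] [NormalizedGCDMonoid α]

theorem gcd_dvd_gcd_powersetCard_prod [DecidableEq ι] {s t : Finset ι} (f : ι → α) {k : ℕ}
    (hst : s ⊆ t) (hk : #t < #s + k) : s.gcd f ∣ (t.powersetCard k).gcd fun u => ∏ i ∈ u, f i := by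
  refine dvd_gcd fun u hu => ?_
  obtain ⟨hut, rfl⟩ := mem_powersetCard.1 hu
  have hmeet : (s ∩ u).Nonempty := by
    rw [← card_pos]
    have := card_union_add_card_inter s u
    have := card_le_card (union_subset hst hut)
    omega
  obtain ⟨i, hi⟩ := hmeet
  obtain ⟨his, hiu⟩ := mem_inter.1 hi
  exact (gcd_dvd his).trans (dvd_prod_of_mem f hiu)

theorem card_filter_not_dvd_lt_of_dvd_gcd_powersetCard_prod {t : Finset ι} (f : ι → α)
    {p : α} [DecidablePred (p ∣ f ·)] (hp : Prime p) {k : ℕ}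
    (hpk : p ∣ (t.powersetCard k).gcd fun u => ∏ i ∈ u, f i) :
    #{i ∈ t | ¬p ∣ f i} < k := by
  by_contra! hk
  obtain ⟨u, hu, rfl⟩ := exists_subset_card_eq hk
  have hpu : p ∣ ∏ i ∈ u, f i :=
    hpk.trans (gcd_dvd (mem_powersetCard.2 ⟨hu.trans (filter_subset _ _), rfl⟩))
  obtain ⟨i, hiu, hpi⟩ := (hp.dvd_finsetProd_iff f).1 hpu
  exact (mem_filter.1 (hu hiu)).2 hpi

theorem one_lt_gcd_of_prime_dvd {s : Finset ι} {f : ι → ℕ} {p : ℕ} (hp : p.Prime)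
    (hs : s.Nonempty) (hf : ∀ i ∈ s, f i ≠ 0) (hpf : ∀ i ∈ s, p ∣ f i) : 1 < s.gcd f := by
  obtain ⟨i, hi⟩ := hs
  have hne : s.gcd f ≠ 0 := fun h => hf i hi (gcd_eq_zero_iff.1 h i hi)
  exact hp.one_lt.trans_le (Nat.le_of_dvd (Nat.pos_of_ne_zero hne) (dvd_gcd hpf))

end Finset

open Finset in
theorem stmt_4_general (t m : ℕ) (a : Fin t → ℕ) (ha : ∀ i, 0 < a i)
    (hm_wit : ∃ s : Finset (Fin t), s.card = m ∧ 1 < s.gcd a)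
    (hm_max : ∀ s : Finset (Fin t), 1 < s.gcd a → s.card ≤ m)
    (d : ℕ → ℕ)
    (hd : ∀ k, d k = ((Finset.univ : Finset (Fin t)).powersetCard k).gcd
      (fun s => ∏ i ∈ s, a i)) :
    d (t - m) = 1 ∧ ∀ i, t - m < i → i ≤ t - 2 → d i ≠ 1 := by
  obtain ⟨S, rfl, hS⟩ := hm_wit
  constructor
  · by_contra hne
    obtain ⟨p, hp, hpd⟩ := Nat.exists_prime_and_dvd hne
    have hfew := card_filter_not_dvd_lt_of_dvd_gcd_powersetCard_prod a hp.prime (hd _ ▸ hpd)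
    have hsplit := card_filter_add_card_filter_not (s := univ) (p ∣ a ·)
    rw [card_univ, Fintype.card_fin] at hsplit
    have hmany := hm_max {i | p ∣ a i} <| one_lt_gcd_of_prime_dvd hp
      (card_pos.1 (by omega)) (fun i _ => (ha i).ne') (fun i hi => (mem_filter.1 hi).2)
    omega
  · intro i hi _ hdi
    have hcard : #(univ : Finset (Fin t)) < #S + i := by
      rw [card_univ, Fintype.card_fin]
      omega
    have hSd : S.gcd a ∣ d i := hd i ▸ gcd_dvd_gcd_powersetCard_prod a (subset_univ S) hcard
    rw [hdi, Nat.dvd_one] at hSd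
    omega

theorem stmt_4 (t m : ℕ) (a : Fin t → ℕ) (ha : ∀ i, 0 < a i)
    (hm2 : 2 ≤ m)
    (hm_wit : ∃ s : Finset (Fin t), s.card = m ∧ 1 < s.gcd a)
    (hm_max : ∀ s : Finset (Fin t), 1 < s.gcd a → s.card ≤ m)
    (d : ℕ → ℕ)
    (hd : ∀ k, d k = ((Finset.univ : Finset (Fin t)).powersetCard k).gcd
      (fun s => ∏ i ∈ s, a i)) :
    d (t - m) = 1 ∧ ∀ i, t - m < i → i ≤ t - 2 → d i ≠ 1 :=
  stmt_4_general t m a ha hm_wit hm_max d hd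
end

section
/- Let a_1,…,a_t and c_1,…,c_t be integers with each a_i ≥ 1 and gcd(a_i, c_i) = 1 for all i, and suppose the a_i are pairwise coprime. Let M be the t×t integer matrix whose i-th row for i < t has a_i in position i, −a_{i+1} in position i+1, and zeros elsewhere, and whose last row is (c_1, c_2, …, c_t). Then the Smith normal form of M is diag(1, 1, …, 1, D) where D = |(∏_{j=1}^t a_j)·(∑_{l=1}^t c_l/a_l)|, i.e., D = |∑_{l=1}^t c_l ∏_{j≠l} a_j|. -/
/-!
Write `u a₀ + v a₁ = 1`. Multiplying on the right by the unimodular block `[[u, a₁], [-v, a₀]] ⊕ 1`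
turns the first row `(a₀, -a₁, 0, …)` into `(1, 0, …, 0)`; clearing the first column then splits off
a `1` and leaves the matrix of the same shape for `a₀a₁, a₂, …` and `a₁c₀ + a₀c₁, c₂, …`, that is,
for `∑ cₗ/aₗ` with its first two fractions added up. This preserves the coprimality hypotheses and
the numerator `(∏ a)(∑ c/a)`, so induction on `t` ends at the `1 × 1` matrix `(c₀) ~ (|c₀|)`.
-/

open Matrix Finset Function

theorem Fin.eq_zero_or_eq_one_or_eq_succ_succ {n : ℕ} (i : Fin (n + 2)) :
    i = 0 ∨ i = 1 ∨ ∃ k : Fin n, i = k.succ.succ := by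
  rcases Fin.eq_zero_or_eq_succ i with rfl | ⟨i, rfl⟩
  · exact .inl rfl
  rcases Fin.eq_zero_or_eq_succ i with rfl | ⟨i, rfl⟩
  · exact .inr (.inl rfl)
  · exact .inr (.inr ⟨i, rfl⟩)

theorem Fin.prod_univ_erase_zero {M : Type*} [CommMonoid M] {m : ℕ} (f : Fin (m + 1) → M) :
    ∏ j ∈ univ.erase 0, f j = ∏ j : Fin m, f j.succ := by
  simp only [← filter_ne', prod_filter, Fin.prod_univ_succ, ne_eq, not_true_eq_false, if_false,
    Fin.succ_ne_zero, not_false_eq_true, if_true, one_mul]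

theorem Fin.prod_univ_erase_succ {M : Type*} [CommMonoid M] {m : ℕ} (f : Fin (m + 1) → M)
    (l : Fin m) : ∏ j ∈ univ.erase l.succ, f j = f 0 * ∏ j ∈ univ.erase l, f j.succ := by
  simp only [← filter_ne', prod_filter, Fin.prod_univ_succ, ne_eq, Fin.succ_inj,
    (Fin.succ_ne_zero l).symm, not_false_eq_true, if_true]

variable {R : Type*} [CommRing R]

theorem IsCoprime.mul_add_mul {x y z w : R} (hxy : IsCoprime x y) (hxz : IsCoprime x z)
    (hyw : IsCoprime y w) : IsCoprime (x * y) (y * z + x * w) :=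
  .mul_left ((hxy.mul_right hxz).add_mul_left_right w)
    (by simpa [add_comm] using (hxy.symm.mul_right hyw).add_mul_left_right z)

namespace Matrix

variable {ι : Type*} [Fintype ι] [DecidableEq ι]

def UnimodEquiv (M N : Matrix ι ι R) : Prop :=
  ∃ P Q : Matrix ι ι R, IsUnit P.det ∧ IsUnit Q.det ∧ P * M * Q = N

namespace UnimodEquiv

theorem refl (M : Matrix ι ι R) : UnimodEquiv M M :=
  ⟨1, 1, by simp, by simp, by simp⟩

theorem trans {A B C : Matrix ι ι R} (hAB : UnimodEquiv A B) (hBC : UnimodEquiv B C) :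
    UnimodEquiv A C := by
  obtain ⟨P₁, Q₁, hP₁, hQ₁, rfl⟩ := hAB
  obtain ⟨P₂, Q₂, hP₂, hQ₂, rfl⟩ := hBC
  refine ⟨P₂ * P₁, Q₁ * Q₂, by simpa using hP₂.mul hP₁, by simpa using hQ₁.mul hQ₂, ?_⟩
  simp only [Matrix.mul_assoc]

theorem mul_left (M : Matrix ι ι R) {P : Matrix ι ι R} (hP : IsUnit P.det) :
    UnimodEquiv M (P * M) :=
  ⟨P, 1, hP, by simp, by simp⟩

theorem mul_right (M : Matrix ι ι R) {Q : Matrix ι ι R} (hQ : IsUnit Q.det) :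
    UnimodEquiv M (M * Q) :=
  ⟨1, Q, by simp, hQ, by simp⟩

theorem neg_right (M : Matrix ι ι R) : UnimodEquiv M (-M) := by
  simpa using mul_left M (P := -1) (by simp [det_neg, isUnit_one.neg.pow])

end UnimodEquiv

/-- The block diagonal matrix `1 ⊕ A`. -/
def oneSum {n : ℕ} (A : Matrix (Fin n) (Fin n) R) : Matrix (Fin (n + 1)) (Fin (n + 1)) R :=
  of fun i j => Fin.cases (Fin.cases 1 0 j) (fun i' => Fin.cases 0 (A i') j) i

section oneSum

variable {n : ℕ} (A B : Matrix (Fin n) (Fin n) R)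

@[simp] theorem oneSum_zero_zero : oneSum A 0 0 = 1 := rfl
@[simp] theorem oneSum_zero_succ (j : Fin n) : oneSum A 0 j.succ = 0 := rfl
@[simp] theorem oneSum_succ_zero (i : Fin n) : oneSum A i.succ 0 = 0 := rfl
@[simp] theorem oneSum_succ_succ (i j : Fin n) : oneSum A i.succ j.succ = A i j := rfl

theorem oneSum_mul : oneSum A * oneSum B = oneSum (A * B) := by
  ext i j
  cases i using Fin.cases <;> cases j using Fin.cases <;> simp [mul_apply, Fin.sum_univ_succ]

theorem det_oneSum : (oneSum A).det = A.det := by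
  simp [det_succ_column_zero, Fin.sum_univ_succ, submatrix]
  rfl

theorem oneSum_diagonal (d : Fin n → R) : oneSum (diagonal d) = diagonal (Fin.cons 1 d) := by
  ext i j
  cases i using Fin.cases <;> cases j using Fin.cases <;> simp [diagonal_apply, eq_comm]

theorem UnimodEquiv.oneSum {A B : Matrix (Fin n) (Fin n) R} (h : UnimodEquiv A B) :
    UnimodEquiv (oneSum A) (oneSum B) := by
  obtain ⟨P, Q, hP, hQ, rfl⟩ := h
  exact ⟨Matrix.oneSum P, Matrix.oneSum Q, by rwa [det_oneSum], by rwa [det_oneSum],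
    by rw [oneSum_mul, oneSum_mul]⟩

end oneSum

theorem unimodEquiv_oneSum_submatrix_succ {m : ℕ} (N : Matrix (Fin (m + 1)) (Fin (m + 1)) R)
    (hN : N 0 = Pi.single 0 1) : UnimodEquiv N (oneSum (N.submatrix Fin.succ Fin.succ)) := by
  let P : Matrix (Fin (m + 1)) (Fin (m + 1)) R :=
    of fun i j => if i = j then 1 else if j = 0 then -N i 0 else 0
  have hP : P.det = 1 := by
    rw [det_of_isLowerTriangular P]
    · simp [P]
    · intro i j (hij : i < j)
      simp [P, hij.ne, ((Fin.zero_le i).trans_lt hij).ne']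
  convert UnimodEquiv.mul_left N (P := P) (by simp [hP])
  have hN' : ∀ j, N 0 j = if j = 0 then 1 else 0 := fun j => by simp [hN, Pi.single_apply]
  ext i j
  cases i using Fin.cases <;> cases j using Fin.cases <;>
    simp [P, mul_apply, Fin.sum_univ_succ, hN', Fin.succ_ne_zero, (Fin.succ_ne_zero _).symm]

/-- The block diagonal matrix `B ⊕ 1`, for a `2 × 2` block `B`. -/
def twoSum {n : ℕ} (B : Matrix (Fin 2) (Fin 2) R) : Matrix (Fin (n + 2)) (Fin (n + 2)) R :=
  of fun i j =>
    if h : (i : ℕ) < 2 ∧ (j : ℕ) < 2 then B ⟨i, h.1⟩ ⟨j, h.2⟩ else (1 : Matrix _ _ R) i j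

section twoSum

variable {n : ℕ} (M : Matrix (Fin (n + 2)) (Fin (n + 2)) R) (B C : Matrix (Fin 2) (Fin 2) R)

theorem mul_twoSum_apply_zero (i : Fin (n + 2)) :
    (M * twoSum B : Matrix _ _ R) i 0 = M i 0 * B 0 0 + M i 1 * B 1 0 := by
  simp [twoSum, mul_apply, Fin.sum_univ_succ, one_apply]

theorem mul_twoSum_apply_one (i : Fin (n + 2)) :
    (M * twoSum B : Matrix _ _ R) i 1 = M i 0 * B 0 1 + M i 1 * B 1 1 := by
  simp [twoSum, mul_apply, Fin.sum_univ_succ, one_apply, Fin.succ_succ_ne_one]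

theorem mul_twoSum_apply_succ_succ (i : Fin (n + 2)) (j : Fin n) :
    (M * twoSum B : Matrix _ _ R) i j.succ.succ = M i j.succ.succ := by
  simp [twoSum, mul_apply, one_apply]

theorem twoSum_mul : twoSum B * twoSum C = (twoSum (B * C) : Matrix (Fin (n + 2)) _ R) := by
  ext i j
  obtain rfl | rfl | ⟨i, rfl⟩ := Fin.eq_zero_or_eq_one_or_eq_succ_succ i <;>
    obtain rfl | rfl | ⟨j, rfl⟩ := Fin.eq_zero_or_eq_one_or_eq_succ_succ j <;>
    simp [twoSum, mul_apply, Fin.sum_univ_succ, one_apply, Fin.succ_succ_ne_one]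

theorem twoSum_one : (twoSum 1 : Matrix (Fin (n + 2)) _ R) = 1 := by
  ext i j
  simp [twoSum, one_apply, Fin.ext_iff]

theorem isUnit_det_twoSum {B : Matrix (Fin 2) (Fin 2) R} (hB : IsUnit B.det) :
    IsUnit (twoSum B : Matrix (Fin (n + 2)) _ R).det :=
  isUnit_det_of_right_inverse (B := twoSum B⁻¹)
    (by rw [twoSum_mul, mul_nonsing_inv _ hB, twoSum_one])

end twoSum

end Matrix

/-- `c₀/a₀ + c₁/a₁ = (a₁c₀ + a₀c₁)/(a₀a₁)`: `mergeDen` and `mergeNum` replace the first two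
fractions of `∑ cₗ/aₗ` by their sum. -/
def mergeDen {n : ℕ} (a : Fin (n + 2) → R) : Fin (n + 1) → R :=
  Fin.cons (a 0 * a 1) fun k => a k.succ.succ

def mergeNum {n : ℕ} (a c : Fin (n + 2) → R) : Fin (n + 1) → R :=
  Fin.cons (a 1 * c 0 + a 0 * c 1) fun k => c k.succ.succ

theorem mergeNum_isCoprime_mergeDen {n : ℕ} {a c : Fin (n + 2) → R}
    (hac : ∀ i, IsCoprime (a i) (c i)) (ha : Pairwise (IsCoprime on a)) (i : Fin (n + 1)) :
    IsCoprime (mergeDen a i) (mergeNum a c i) := by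
  cases i using Fin.cases with
  | zero => exact (ha Fin.zero_ne_one).mul_add_mul (hac 0) (hac 1)
  | succ i => exact hac _

theorem pairwise_isCoprime_mergeDen {n : ℕ} {a : Fin (n + 2) → R}
    (ha : Pairwise (IsCoprime on a)) : Pairwise (IsCoprime on mergeDen a) := by
  have h0 : ∀ k : Fin n, IsCoprime (a 0 * a 1) (a k.succ.succ) := fun k =>
    .mul_left (ha (Fin.succ_ne_zero _).symm) (ha (Fin.succ_succ_ne_one k).symm)
  intro i j hij
  rcases Fin.eq_zero_or_eq_succ i with rfl | ⟨i, rfl⟩ <;>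
    rcases Fin.eq_zero_or_eq_succ j with rfl | ⟨j, rfl⟩
  · exact absurd rfl hij
  · exact h0 j
  · exact (h0 i).symm
  · exact ha fun h => hij (by simpa using h)

def crossSum {n : ℕ} (a c : Fin n → R) : R := ∑ l, c l * ∏ j ∈ univ.erase l, a j

theorem crossSum_merge {n : ℕ} (a c : Fin (n + 2) → R) :
    crossSum (mergeDen a) (mergeNum a c) = crossSum a c := by
  simp only [crossSum, mergeDen, mergeNum, Fin.sum_univ_succ, Fin.prod_univ_erase_zero,
    Fin.prod_univ_erase_succ, Fin.prod_univ_succ, Fin.cons_zero, Fin.cons_succ,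
    Fin.succ_zero_eq_one, mul_assoc]
  ring

def chainMatrix {n : ℕ} (a c : Fin (n + 1) → R) : Matrix (Fin (n + 1)) (Fin (n + 1)) R :=
  of fun i j => if (i : ℕ) = n then c j else if j = i then a i
    else if (j : ℕ) = i + 1 then -a j else 0

section chainMatrix

variable {n : ℕ}

theorem chainMatrix_apply_congr {a b c d : Fin (n + 1) → R} {i j : Fin (n + 1)}
    (hab : a j = b j) (hcd : c j = d j) : chainMatrix a c i j = chainMatrix b d i j := by
  simp only [chainMatrix, of_apply]
  split_ifs with h1 h2 <;> simp_all

theorem chainMatrix_apply_zero_right (a c : Fin (n + 1) → R) (i : Fin (n + 1)) :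
    chainMatrix a c i 0 = if (i : ℕ) = n then c 0 else if i = 0 then a 0 else 0 := by
  simp only [chainMatrix, of_apply, eq_comm (a := (0 : Fin (n + 1)))]
  split_ifs with h <;> simp_all

theorem chainMatrix_succ_succ (a c : Fin (n + 2) → R) (i j : Fin (n + 1)) :
    chainMatrix a c i.succ j.succ = chainMatrix (Fin.tail a) (Fin.tail c) i j := by
  simp [chainMatrix, Fin.tail]

theorem chainMatrix_zero_zero (a c : Fin (n + 2) → R) : chainMatrix a c 0 0 = a 0 := by
  simp [chainMatrix]

theorem chainMatrix_zero_one (a c : Fin (n + 2) → R) : chainMatrix a c 0 1 = -a 1 := by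
  simp [chainMatrix]

theorem chainMatrix_zero_succ_succ (a c : Fin (n + 2) → R) (j : Fin n) :
    chainMatrix a c 0 j.succ.succ = 0 := by
  simp [chainMatrix]

end chainMatrix

theorem chainMatrix_unimodEquiv_oneSum {n : ℕ} (a c : Fin (n + 2) → R) {u v : R}
    (huv : u * a 0 + v * a 1 = 1) :
    UnimodEquiv (chainMatrix a c) (oneSum (chainMatrix (mergeDen a) (mergeNum a c))) := by
  set N := chainMatrix a c * twoSum !![u, a 1; -v, a 0]
  have hQ : IsUnit (twoSum !![u, a 1; -v, a 0] : Matrix (Fin (n + 2)) _ R).det :=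
    isUnit_det_twoSum (by rw [det_fin_two_of]; convert isUnit_one; linear_combination huv)
  have hrow : N 0 = Pi.single 0 1 := by
    ext j
    obtain rfl | rfl | ⟨j, rfl⟩ := Fin.eq_zero_or_eq_one_or_eq_succ_succ j
    · simp [N, mul_twoSum_apply_zero, chainMatrix_zero_zero, chainMatrix_zero_one]
      linear_combination huv
    · simp [N, mul_twoSum_apply_one, chainMatrix_zero_zero, chainMatrix_zero_one]; ring
    · simp [N, mul_twoSum_apply_succ_succ, chainMatrix_zero_succ_succ]
  have hsub : N.submatrix Fin.succ Fin.succ = chainMatrix (mergeDen a) (mergeNum a c) := by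
    ext i j
    cases j using Fin.cases with
    | zero =>
      have hcol1 := chainMatrix_succ_succ a c i 0
      rw [Fin.succ_zero_eq_one] at hcol1
      simp only [N, submatrix_apply, Fin.succ_zero_eq_one, mul_twoSum_apply_one, hcol1,
        chainMatrix_apply_zero_right]
      split_ifs <;> simp_all [mergeDen, mergeNum, Fin.tail] <;> ring
    | succ j =>
      simp only [N, submatrix_apply, mul_twoSum_apply_succ_succ, chainMatrix_succ_succ]
      exact chainMatrix_apply_congr (by simp [mergeDen, Fin.tail]) (by simp [mergeNum, Fin.tail])
  exact (UnimodEquiv.mul_right _ hQ).trans (hsub ▸ unimodEquiv_oneSum_submatrix_succ N hrow)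

theorem chainMatrix_unimodEquiv_diagonal {n : ℕ} (a c : Fin (n + 1) → ℤ)
    (hac : ∀ i, IsCoprime (a i) (c i)) (ha : Pairwise (IsCoprime on a)) :
    UnimodEquiv (chainMatrix a c)
      (diagonal fun i => if (i : ℕ) = n then |crossSum a c| else 1) := by
  induction n with
  | zero =>
    have hM : chainMatrix a c = diagonal fun _ => c 0 := by
      ext i j
      fin_cases i; fin_cases j
      simp [chainMatrix]
    have hD : (diagonal fun i : Fin 1 => if (i : ℕ) = 0 then |crossSum a c| else 1) =
        diagonal fun _ => |c 0| := by
      simp [crossSum]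
    rw [hM, hD]
    rcases abs_choice (c 0) with h | h <;> rw [h]
    · exact .refl _
    · simpa using UnimodEquiv.neg_right (diagonal fun _ : Fin 1 => c 0)
  | succ n ih =>
    obtain ⟨u, v, huv⟩ := ha (Fin.zero_ne_one : (0 : Fin (n + 2)) ≠ 1)
    have hmerged := ih (mergeDen a) (mergeNum a c) (mergeNum_isCoprime_mergeDen hac ha)
      (pairwise_isCoprime_mergeDen ha)
    refine (chainMatrix_unimodEquiv_oneSum a c huv).trans ?_
    convert hmerged.oneSum using 1
    rw [oneSum_diagonal, crossSum_merge]
    congr 1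
    ext i
    cases i using Fin.cases <;> simp

theorem stmt_7_general (t : ℕ) (a c : Fin t → ℤ)
    (hac : ∀ i, IsCoprime (a i) (c i))
    (hpair : ∀ i j, i ≠ j → IsCoprime (a i) (a j))
    (M : Matrix (Fin t) (Fin t) ℤ)
    (hM : ∀ i j : Fin t, M i j =
      if (i : ℕ) = t - 1 then c j
      else if j = i then a i
      else if (j : ℕ) = (i : ℕ) + 1 then -(a j) else 0) :
    ∃ P Q : Matrix (Fin t) (Fin t) ℤ, IsUnit P.det ∧ IsUnit Q.det ∧
      P * M * Q = Matrix.diagonal (fun i : Fin t =>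
        if (i : ℕ) = t - 1 then |∑ l, c l * ∏ j ∈ Finset.univ.erase l, a j| else 1) := by
  cases t with
  | zero => exact ⟨1, 1, by simp, by simp, Subsingleton.elim _ _⟩
  | succ n =>
    have hM' : M = chainMatrix a c := by
      ext i j
      simp [hM, chainMatrix]
    rw [hM', Nat.add_sub_cancel]
    exact chainMatrix_unimodEquiv_diagonal a c hac fun i j hij => hpair i j hij

theorem stmt_7 (t : ℕ) (ht : 1 ≤ t) (a c : Fin t → ℤ)
    (ha : ∀ i, 1 ≤ a i) (hac : ∀ i, IsCoprime (a i) (c i))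
    (hpair : ∀ i j, i ≠ j → IsCoprime (a i) (a j))
    (M : Matrix (Fin t) (Fin t) ℤ)
    (hM : ∀ i j : Fin t, M i j =
      if (i : ℕ) = t - 1 then c j
      else if j = i then a i
      else if (j : ℕ) = (i : ℕ) + 1 then -(a j) else 0) :
    ∃ P Q : Matrix (Fin t) (Fin t) ℤ, IsUnit P.det ∧ IsUnit Q.det ∧
      P * M * Q = Matrix.diagonal (fun i : Fin t =>
        if (i : ℕ) = t - 1 then |∑ l, c l * ∏ j ∈ Finset.univ.erase l, a j| else 1) :=
  stmt_7_general t a c hac hpair M hM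
end

section
/- Let R be the t×t integer matrix with rows r_1,…,r_t where for i < t, row r_i has a_i in position i, −a_{i+1} in position i+1, zeros elsewhere, and row r_t = (b_1,…,b_t), where a_i ≥ 1 and b_i ≥ 1 are integers. Then |det(R)| = ∑_{i=1}^t b_i ∏_{j≠i} a_j. -/
theorem stmt_9 (t : ℕ) (ht : 1 ≤ t) (a b : Fin t → ℤ)
    (ha : ∀ i, 1 ≤ a i) (hb : ∀ i, 1 ≤ b i)
    (R : Matrix (Fin t) (Fin t) ℤ)
    (hR : ∀ i j : Fin t, R i j =
      if (i : ℕ) = t - 1 then b j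
      else if j = i then a i
      else if (j : ℕ) = (i : ℕ) + 1 then -(a j) else 0) :
    |R.det| = ∑ i, b i * ∏ j ∈ Finset.univ.erase i, a j := by
  obtain ⟨n, rfl⟩ : ∃ n, t = n + 1 := ⟨t - 1, by omega⟩
  classical
  have hapos : ∀ i, (0:ℤ) < a i := fun i => lt_of_lt_of_le one_pos (ha i)
  set c : Fin (n+1) → ℤ := fun i => ∏ j ∈ Finset.univ.erase i, a j with hc
  have hcpos : ∀ i, 0 < c i := fun i => Finset.prod_pos (fun j _ => hapos j)
  have hac : ∀ i : Fin (n+1), a i * c i = ∏ j, a j :=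
    fun i => Finset.mul_prod_erase _ _ (Finset.mem_univ i)
  set S : ℤ := ∑ i, b i * c i with hS
  set C : Matrix (Fin (n+1)) (Fin (n+1)) ℤ :=
    fun i j => if j = Fin.last n then c i else if i = j then 1 else 0 with hCdef
  -- C is upper triangular
  have hCtri : C.BlockTriangular id := by
    intro i j hij
    have h1 : j ≠ Fin.last n := by
      intro h; subst h
      exact absurd (Fin.le_last i) (not_le.mpr hij)
    have h2 : i ≠ j := (ne_of_gt hij)
    simp [hCdef, h1, h2]
  have hCdet : C.det = c (Fin.last n) := by
    rw [Matrix.det_of_upperTriangular hCtri]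
    rw [Finset.prod_eq_single (Fin.last n)]
    · simp [hCdef]
    · intro i _ hi
      simp [hCdef, hi]
    · simp
  -- the product R * C
  set D : Matrix (Fin (n+1)) (Fin (n+1)) ℤ :=
    fun i j => if j = Fin.last n then (if i = Fin.last n then S else 0) else R i j with hDdef
  have hRC : R * C = D := by
    ext i j
    rw [Matrix.mul_apply]
    by_cases hj : j = Fin.last n
    · subst hj
      by_cases hi : i = Fin.last n
      · subst hi
        have : ∀ k : Fin (n+1), R (Fin.last n) k * C k (Fin.last n) = b k * c k := by
          intro k
          rw [hR]
          simp [hCdef, Fin.last]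
        simp only [this]
        simp [hDdef, hS]
      · -- i < last : row is a i at i, -(a i') at i+1
        have hin : (i : ℕ) < n := by
          rcases Fin.lt_last_iff_ne_last.mpr hi with h
          exact h
        set i' : Fin (n+1) := ⟨(i:ℕ)+1, by omega⟩ with hi'
        have hii' : i ≠ i' := by
          intro h
          have := congrArg (Fin.val) h
          simp [hi'] at this
        have hzero : ∀ k ∈ Finset.univ, k ≠ i → k ≠ i' →
            R i k * C k (Fin.last n) = 0 := by
          intro k _ hk1 hk2
          rw [hR]
          have e1 : (i : ℕ) ≠ n := by omega
          have e2 : k ≠ i := hk1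
          have e3 : (k : ℕ) ≠ (i : ℕ) + 1 := by
            intro h
            apply hk2
            apply Fin.ext
            simp [hi', h]
          simp [e1, e2, e3]
        rw [← Finset.add_sum_erase _ _ (Finset.mem_univ i),
          Finset.sum_eq_single_of_mem i'
            (Finset.mem_erase.mpr ⟨hii'.symm, Finset.mem_univ _⟩)]
        · have v1 : R i i * C i (Fin.last n) = a i * c i := by
            rw [hR]
            have e1 : (i : ℕ) ≠ n := by omega
            simp [hCdef, e1]
          have v2 : R i i' * C i' (Fin.last n) = -(a i' * c i') := by
            rw [hR]
            have e1 : (i : ℕ) ≠ n := by omega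
            have e2 : (i' : ℕ) = (i : ℕ) + 1 := rfl
            simp [hCdef, e1, hii'.symm, e2]
          rw [v1, v2, hac, hac]
          have hlast : i ≠ Fin.last n := hi
          simp [hDdef, hlast]
        · intro k hk hki'
          exact hzero k (Finset.mem_univ k) (Finset.ne_of_mem_erase hk) hki'
    · -- column j ≠ last : C's column is e_j
      have : ∀ k : Fin (n+1), R i k * C k j = if k = j then R i j else 0 := by
        intro k
        by_cases hkj : k = j
        · subst hkj; simp [hCdef, hj]
        · simp [hCdef, hj, hkj]
      simp only [this]
      simp [hDdef, hj]
  -- determinant of D by expansion along the last column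
  have hDdet : D.det = S * ∏ i : Fin n, a i.castSucc := by
    rw [Matrix.det_succ_column D (Fin.last n),
      Finset.sum_eq_single_of_mem (Fin.last n) (Finset.mem_univ _)]
    · have h1 : D (Fin.last n) (Fin.last n) = S := by simp [hDdef]
      have h2 : ((-1 : ℤ)) ^ ((Fin.last n : ℕ) + (Fin.last n : ℕ)) = 1 := by
        simp [← two_mul, pow_mul]
      rw [h1, h2, one_mul]
      congr 1
      -- the minor is upper triangular with diagonal a ∘ castSucc
      have htri : (D.submatrix (Fin.last n).succAbove (Fin.last n).succAbove).BlockTriangular id := by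
        intro i j hij
        simp only [Matrix.submatrix_apply, Fin.succAbove_last]
        have hjilt : (j : ℕ) < (i : ℕ) := hij
        have hjl : j.castSucc ≠ Fin.last n := (Fin.castSucc_lt_last j).ne
        have hil : (i : ℕ) ≠ n := Nat.ne_of_lt i.isLt
        have hji : j.castSucc ≠ i.castSucc := by
          simp only [ne_eq, Fin.castSucc_inj]
          exact ne_of_lt hij
        have hji2 : ((j : ℕ)) ≠ (i : ℕ) + 1 := by omega
        simp [hDdef, hjl, hR, hil, hji, hji2]
      rw [Matrix.det_of_upperTriangular htri]
      apply Finset.prod_congr rfl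
      intro i _
      simp only [Matrix.submatrix_apply, Fin.succAbove_last]
      have hjl : i.castSucc ≠ Fin.last n := (Fin.castSucc_lt_last i).ne
      have hil : (i : ℕ) ≠ n := Nat.ne_of_lt i.isLt
      simp [hDdef, hjl, hR, hil]
    · intro i _ hi
      have : D i (Fin.last n) = 0 := by simp [hDdef, hi]
      rw [this]
      ring
  have hclast : c (Fin.last n) = ∏ i : Fin n, a i.castSucc := by
    have h := Fin.prod_univ_castSucc (f := a)
    have h2 : a (Fin.last n) * c (Fin.last n) = ∏ j, a j := hac _
    have h3 : a (Fin.last n) * c (Fin.last n)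
        = a (Fin.last n) * ∏ i : Fin n, a i.castSucc := by
      rw [h2, h]; ring
    exact mul_left_cancel₀ (hapos (Fin.last n)).ne' h3
  have hdetR : R.det = S := by
    have hmul : R.det * C.det = D.det := by rw [← Matrix.det_mul, hRC]
    rw [hCdet, hDdet, hclast] at hmul
    have hne : (∏ i : Fin n, a i.castSucc) ≠ 0 :=
      (Finset.prod_pos (fun j _ => hapos _)).ne'
    exact mul_right_cancel₀ hne hmul
  have hSpos : 0 < S := by
    rw [hS]
    apply Finset.sum_pos
    · intro i _
      exact mul_pos (lt_of_lt_of_le one_pos (hb i)) (hcpos i)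
    · exact Finset.univ_nonempty
  rw [hdetR, abs_of_pos hSpos, hS]
end

section
/- Let a_1,…,a_t and c_1,…,c_t be integers with a_i ≥ 1 and gcd(a_i, c_i) = 1 for every i. Let R be the t×t matrix with rows: for i < t, a_i in position i, −a_{i+1} in position i+1, zeros elsewhere; last row (c_1,…,c_t). Then for each k with 1 ≤ k ≤ t−1, the k-th determinant divisor Δ_k of R equals the gcd of all products a_{i_1}⋯a_{i_{k−1}} over 1 ≤ i_1 < ⋯ < i_{k−1} ≤ t (with Δ_1 = 1). -/
open Finset Matrix

private lemma det_zero_aux {n : ℕ} (M : Matrix (Fin n) (Fin n) ℤ)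
    (β γ : Finset (Fin n)) (hcard : γ.card < β.card)
    (hz : ∀ p ∈ β, ∀ q ∉ γ, M p q = 0) : M.det = 0 := by
  rw [Matrix.det_apply]
  refine Finset.sum_eq_zero fun σ _ => ?_
  have hex : ∃ q, σ q ∈ β ∧ q ∉ γ := by
    by_contra hcon
    push_neg at hcon
    have hsub : β ⊆ γ.image σ := by
      intro p hp
      exact Finset.mem_image.mpr ⟨σ.symm p, hcon _ (by simpa using hp), by simp⟩
    have h1 := Finset.card_le_card hsub
    have h2 := Finset.card_image_le (s := γ) (f := σ)
    omega
  obtain ⟨q, hqβ, hqγ⟩ := hex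
  exact smul_eq_zero_of_right _ (Finset.prod_eq_zero (Finset.mem_univ q) (hz _ hqβ _ hqγ))

private lemma prod_fin_eq_prod_finset {ℓ t : ℕ} (W : Finset (Fin t)) (hW : W.card = ℓ)
    (g : Fin ℓ → Fin t) (hg : Function.Injective g) (hmem : ∀ q, g q ∈ W)
    (f : Fin t → ℤ) : ∏ q, f (g q) = ∏ w ∈ W, f w := by
  have himg : Finset.image g Finset.univ = W := by
    apply Finset.eq_of_subset_of_card_le
    · intro w hw
      obtain ⟨q, _, rfl⟩ := Finset.mem_image.mp hw
      exact hmem q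
    · rw [Finset.card_image_of_injective _ hg, Finset.card_univ, Fintype.card_fin, hW]
  rw [← himg, Finset.prod_image (fun x _ y _ h => hg h)]

private def rho {t : ℕ} (u : Fin t) (w : Fin t) : Fin t :=
  if (w : ℕ) < u then w else ⟨(w : ℕ) - 1, by omega⟩

private lemma rho_val {t : ℕ} (u w : Fin t) :
    ((rho u w : Fin t) : ℕ) = if (w : ℕ) < u then (w : ℕ) else (w : ℕ) - 1 := by
  unfold rho; split <;> rfl

private lemma rho_ne_last {t : ℕ} {u w : Fin t} (h : w ≠ u) :
    ((rho u w : Fin t) : ℕ) ≠ t - 1 := by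
  have hw := w.2; have hu := u.2
  have hne : (w : ℕ) ≠ (u : ℕ) := fun hh => h (Fin.ext hh)
  rw [rho_val]; split <;> omega

private lemma rho_inj {t : ℕ} {u w1 w2 : Fin t} (h1 : w1 ≠ u) (h2 : w2 ≠ u)
    (h : rho u w1 = rho u w2) : w1 = w2 := by
  have hv : ((rho u w1 : Fin t) : ℕ) = ((rho u w2 : Fin t) : ℕ) := by rw [h]
  rw [rho_val, rho_val] at hv
  have e1 : (w1 : ℕ) ≠ (u : ℕ) := fun hh => h1 (Fin.ext hh)
  have e2 : (w2 : ℕ) ≠ (u : ℕ) := fun hh => h2 (Fin.ext hh)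
  apply Fin.ext
  revert hv; split <;> split <;> omega


private lemma natAbs_dvd_helper {d : ℕ} {x : ℤ} (h : d ∣ x.natAbs) : (d : ℤ) ∣ x :=
  (Int.natCast_dvd_natCast.mpr h).trans (Int.natAbs_dvd.mpr dvd_rfl)

private lemma dvd_natAbs_helper {d : ℕ} {x : ℤ} (h : (d : ℤ) ∣ x) : d ∣ x.natAbs := by
  simpa using Int.natAbs_dvd_natAbs.mpr h

section Main

variable {t : ℕ} {a c : Fin t → ℤ} {R : Matrix (Fin t) (Fin t) ℤ}
variable (hR : ∀ i j : Fin t, R i j =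
      if (i : ℕ) = t - 1 then c j
      else if j = i then a i
      else if (j : ℕ) = (i : ℕ) + 1 then -(a j) else 0)

include hR

private lemma entry_dvd (i j : Fin t) (hi : (i : ℕ) ≠ t - 1) : a j ∣ R i j := by
  rw [hR i j, if_neg hi]
  split
  · rename_i h; subst h; exact dvd_rfl
  · split
    · exact dvd_neg.mpr dvd_rfl
    · exact dvd_zero _

private lemma entry_zero (i j : Fin t) (hi : (i : ℕ) ≠ t - 1)
    (h1 : j ≠ i) (h2 : (j : ℕ) ≠ (i : ℕ) + 1) : R i j = 0 := by
  rw [hR i j, if_neg hi, if_neg h1, if_neg h2]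

/-- Key Lemma I: shifted minor is `± ∏ a` over the column set. -/
private lemma KL1 {ℓ : ℕ} (W : Finset (Fin t)) (hW : W.card = ℓ)
    (u : Fin t) (hu : u ∉ W) :
    ∃ ε : ℤ, (ε = 1 ∨ ε = -1) ∧
      (R.submatrix (fun p => rho u (W.orderEmbOfFin hW p)) (fun p => W.orderEmbOfFin hW p)).det
        = ε * ∏ w ∈ W, a w := by
  set e := W.orderEmbOfFin hW with he
  have hmem : ∀ q, e q ∈ W := fun q => Finset.orderEmbOfFin_mem W hW q
  have hne : ∀ q, e q ≠ u := fun q hh => hu (hh ▸ hmem q)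
  have hnev : ∀ q, ((e q : Fin t) : ℕ) ≠ (u : ℕ) := fun q hh => hne q (Fin.ext hh)
  set M := R.submatrix (fun p => rho u (e p)) (fun p => e p) with hM
  obtain ⟨κ, hκ⟩ : ∃ κ : Fin ℓ → ℕ,
      ∀ q, κ q = if (e q : ℕ) < u then (e q : ℕ) else 2 * t - (e q : ℕ) :=
    ⟨_, fun q => rfl⟩
  have hκinj : Function.Injective κ := by
    intro q1 q2 hq
    have b1 := (e q1).2; have b2 := (e q2).2
    have hu2 := u.2
    have hval : (e q1 : ℕ) = (e q2 : ℕ) := by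
      have n1 := hnev q1; have n2 := hnev q2
      by_cases c1 : ((e q1 : Fin t) : ℕ) < (u : ℕ) <;>
        by_cases c2 : ((e q2 : Fin t) : ℕ) < (u : ℕ) <;>
        [rw [hκ q1, hκ q2, if_pos c1, if_pos c2] at hq;
         rw [hκ q1, hκ q2, if_pos c1, if_neg c2] at hq;
         rw [hκ q1, hκ q2, if_neg c1, if_pos c2] at hq;
         rw [hκ q1, hκ q2, if_neg c1, if_neg c2] at hq] <;> omega
    exact e.injective (Fin.ext hval)
  have hstep : ∀ p q, M p q ≠ 0 → κ p ≤ κ q := by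
    intro p q hMpq
    have hrow : ((rho u (e p) : Fin t) : ℕ) ≠ t - 1 := rho_ne_last (hne p)
    have n1 := hnev p; have n2 := hnev q
    have b1 := (e p).2; have b2 := (e q).2; have hu2 := u.2
    by_contra hlt
    apply hMpq
    show R (rho u (e p)) (e q) = 0
    apply entry_zero hR _ _ hrow
    · intro hh
      have hv := congrArg Fin.val hh
      rw [rho_val] at hv
      apply hlt
      by_cases cp : ((e p : Fin t) : ℕ) < (u : ℕ) <;>
        by_cases cq : ((e q : Fin t) : ℕ) < (u : ℕ) <;>
        [(rw [hκ p, hκ q, if_pos cp, if_pos cq]; rw [if_pos cp] at hv);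
         (rw [hκ p, hκ q, if_pos cp, if_neg cq]; rw [if_pos cp] at hv);
         (rw [hκ p, hκ q, if_neg cp, if_pos cq]; rw [if_neg cp] at hv);
         (rw [hκ p, hκ q, if_neg cp, if_neg cq]; rw [if_neg cp] at hv)] <;> omega
    · intro hh
      rw [rho_val] at hh
      apply hlt
      by_cases cp : ((e p : Fin t) : ℕ) < (u : ℕ) <;>
        by_cases cq : ((e q : Fin t) : ℕ) < (u : ℕ) <;>
        [(rw [hκ p, hκ q, if_pos cp, if_pos cq]; rw [if_pos cp] at hh);
         (rw [hκ p, hκ q, if_pos cp, if_neg cq]; rw [if_pos cp] at hh);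
         (rw [hκ p, hκ q, if_neg cp, if_pos cq]; rw [if_neg cp] at hh);
         (rw [hκ p, hκ q, if_neg cp, if_neg cq]; rw [if_neg cp] at hh)] <;> omega
  have hdiag : ∀ q, M q q = (if (e q : ℕ) < u then (1:ℤ) else -1) * a (e q) := by
    intro q
    have hrow : ((rho u (e q) : Fin t) : ℕ) ≠ t - 1 := rho_ne_last (hne q)
    have hn := hnev q
    have b := (e q).2
    show R (rho u (e q)) (e q) = _
    rw [hR, if_neg hrow]
    by_cases h : (e q : ℕ) < u
    · have hq : rho u (e q) = e q := by unfold rho; rw [if_pos h]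
      rw [hq, if_pos rfl, if_pos h, one_mul]
    · have hv : ((rho u (e q) : Fin t) : ℕ) = (e q : ℕ) - 1 := by rw [rho_val, if_neg h]
      have h1 : e q ≠ rho u (e q) := by
        intro hh; have := congrArg Fin.val hh; omega
      have h2 : (e q : ℕ) = ((rho u (e q) : Fin t) : ℕ) + 1 := by omega
      rw [if_neg h1, if_pos h2, if_neg h, neg_one_mul]
  have hdet : M.det = ∏ q, M q q := by
    rw [Matrix.det_apply]
    rw [Finset.sum_eq_single (1 : Equiv.Perm (Fin ℓ))]
    · simp
    · intro σ _ hσ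
      have hzero : ∏ i, M (σ i) i = 0 := by
        by_contra hz
        have hall : ∀ i, M (σ i) i ≠ 0 := by
          intro i hi
          exact hz (Finset.prod_eq_zero (Finset.mem_univ i) hi)
        have hle : ∀ i ∈ Finset.univ, κ (σ i) ≤ κ i := fun i _ => hstep _ _ (hall i)
        have hsum : ∑ i, κ (σ i) = ∑ i, κ i := Equiv.sum_comp σ κ
        have heq := (Finset.sum_eq_sum_iff_of_le hle).mp hsum
        apply hσ
        refine Equiv.ext fun i => ?_
        rw [Equiv.Perm.one_apply]
        exact hκinj (heq i (Finset.mem_univ i))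
      rw [hzero, smul_zero]
    · intro h; exact absurd (Finset.mem_univ _) h
  refine ⟨∏ q, (if (e q : ℕ) < u then (1:ℤ) else -1), ?_, ?_⟩
  · refine Finset.prod_induction _ (fun x => x = 1 ∨ x = -1) ?_ (Or.inl rfl) ?_
    · rintro x y (rfl | rfl) (rfl | rfl) <;> simp
    · intro q _; split <;> simp
  · rw [hdet]
    calc ∏ q, M q q = ∏ q, ((if (e q : ℕ) < u then (1:ℤ) else -1) * a (e q)) :=
          Finset.prod_congr rfl fun q _ => hdiag q
      _ = (∏ q, (if (e q : ℕ) < u then (1:ℤ) else -1)) * ∏ q, a (e q) :=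
          Finset.prod_mul_distrib
      _ = _ := by
          rw [prod_fin_eq_prod_finset W hW (fun p => e p) (fun x y h => e.injective h) hmem]



/-- Any minor with rows avoiding the last row is divisible by the product of `a` over columns. -/
private lemma B3 {ℓ : ℕ} (f g : Fin ℓ → Fin t) (hf : ∀ p, ((f p : Fin t) : ℕ) ≠ t - 1) :
    (∏ q, a (g q)) ∣ (R.submatrix f g).det := by
  rw [Matrix.det_apply]
  refine Finset.dvd_sum fun σ _ => ?_
  rw [Units.smul_def, smul_eq_mul]
  refine Dvd.dvd.mul_left ?_ _
  exact Finset.prod_dvd_prod_of_dvd _ _ fun q _ => entry_dvd hR _ _ (hf (σ q))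

/-- Step A : the gcd of products divides each `k × k` minor. -/
private lemma stepA {k : ℕ} (hk : 1 ≤ k) (f g : Fin k ↪ Fin t) :
    ((Finset.univ : Finset (Fin t)).powersetCard (k - 1)).gcd
        (fun s => (∏ i ∈ s, a i).natAbs)
      ∣ ((R.submatrix f g).det).natAbs := by
  set G := ((Finset.univ : Finset (Fin t)).powersetCard (k - 1)).gcd
      (fun s => (∏ i ∈ s, a i).natAbs) with hG
  apply dvd_natAbs_helper
  rw [Matrix.det_apply]
  refine Finset.dvd_sum fun σ _ => ?_
  rw [Units.smul_def, smul_eq_mul]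
  refine Dvd.dvd.mul_left ?_ _
  -- pick the position i0 hitting the last row, if any
  have hex : ∃ i0 : Fin k, ∀ i, i ≠ i0 → ((f (σ i) : Fin t) : ℕ) ≠ t - 1 := by
    by_cases hx : ∃ i, ((f (σ i) : Fin t) : ℕ) = t - 1
    · obtain ⟨i0, hi0⟩ := hx
      refine ⟨i0, fun i hne hval => hne ?_⟩
      have : f (σ i) = f (σ i0) := Fin.ext (hval.trans hi0.symm)
      exact σ.injective (f.injective this)
    · push_neg at hx
      exact ⟨⟨0, hk⟩, fun i _ => hx i⟩
  obtain ⟨i0, hoth⟩ := hex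
  rw [← Finset.prod_erase_mul Finset.univ _ (Finset.mem_univ i0)]
  refine Dvd.dvd.mul_right ?_ _
  -- G divides the product of a over the (k-1)-element image
  set s := (Finset.univ.erase i0).image g with hs
  have hscard : s.card = k - 1 := by
    rw [hs, Finset.card_image_of_injective _ g.injective, Finset.card_erase_of_mem
      (Finset.mem_univ i0), Finset.card_univ, Fintype.card_fin]
  have h1 : (G : ℤ) ∣ ∏ i ∈ s, a i :=
    natAbs_dvd_helper (Finset.gcd_dvd (Finset.mem_powersetCard_univ.mpr hscard))
  have h2 : ∏ i ∈ s, a i = ∏ q ∈ Finset.univ.erase i0, a (g q) := by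
    rw [hs, Finset.prod_image (fun x _ y _ h => g.injective h)]
  refine (h1.trans ?_)
  rw [h2]
  exact Finset.prod_dvd_prod_of_dvd _ _ fun q hq =>
    entry_dvd hR _ _ (hoth q (Finset.ne_of_mem_erase hq))


/-- Step B : the gcd of `k×k` minors divides each product over a `(k-1)`-subset. -/
private lemma stepB {k : ℕ} (hk1 : 1 ≤ k) (hk2 : k ≤ t - 1) (ht : 1 ≤ t)
    (hac : ∀ i, IsCoprime (a i) (c i)) :
    ∀ n : ℕ, ∀ S : Finset (Fin t), S.card = k - 1 →
      (∀ w : Fin t, (w : ℕ) < n → w ∈ S) → (∀ w : Fin t, (w : ℕ) = n → w ∉ S) →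
      (((Finset.univ : Finset ((Fin k ↪ Fin t) × (Fin k ↪ Fin t))).gcd
        (fun p => ((R.submatrix p.1 p.2).det).natAbs) : ℕ) : ℤ) ∣ ∏ w ∈ S, a w := by
  set d : ℕ := ((Finset.univ : Finset ((Fin k ↪ Fin t) × (Fin k ↪ Fin t))).gcd
        (fun p => ((R.submatrix p.1 p.2).det).natAbs)) with hd
  have hdm : ∀ (f g : Fin k ↪ Fin t), (d : ℤ) ∣ (R.submatrix f g).det := by
    intro f g
    exact natAbs_dvd_helper (Finset.gcd_dvd (Finset.mem_univ (f, g)))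
  have h2t : 2 ≤ t := by omega
  obtain ⟨k', rfl⟩ : ∃ k', k = k' + 1 := ⟨k - 1, by omega⟩
  have hk't : k' ≤ t - 2 := by omega
  intro n
  induction n using Nat.strong_induction_on with
  | _ n IH =>
  intro S hS hbelow hnotmem
  have hS' : S.card = k' := by omega
  have hn_lt : n < t := by
    by_contra hge
    push_neg at hge
    have huniv : S = Finset.univ :=
      Finset.eq_univ_of_forall fun w => hbelow w (lt_of_lt_of_le w.2 hge)
    have := congrArg Finset.card huniv
    rw [Finset.card_univ, Fintype.card_fin] at this
    omega
  set jF : Fin t := ⟨n, hn_lt⟩ with hjF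
  have hjFval : ((jF : Fin t) : ℕ) = n := rfl
  have hjS : jF ∉ S := hnotmem jF rfl
  have hcompl : jF ∈ Sᶜ := Finset.mem_compl.mpr hjS
  have hune : (Sᶜ.erase jF).Nonempty := by
    rw [← Finset.card_pos, Finset.card_erase_of_mem hcompl, Finset.card_compl,
      Fintype.card_fin, hS']
    omega
  obtain ⟨u, hu⟩ := hune
  have huS : u ∉ S := Finset.mem_compl.mp (Finset.mem_of_mem_erase hu)
  have hunej : u ≠ jF := Finset.ne_of_mem_erase hu
  have hun : n < (u : ℕ) := by
    rcases lt_trichotomy ((u : ℕ)) n with h | h | h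
    · exact absurd (hbelow u h) huS
    · exact absurd (Fin.ext h : u = jF) hunej
    · exact h
  -- the column set
  set C : Finset (Fin t) := insert jF S with hCdef
  have hCcard : C.card = k' + 1 := by
    rw [hCdef, Finset.card_insert_of_notMem hjS, hS']
  have huC : u ∉ C := by
    rw [hCdef, Finset.mem_insert]
    rintro (h | h)
    · exact hunej h
    · exact huS h
  set g' := C.orderEmbOfFin hCcard with hg'
  set embS := S.orderEmbOfFin hS' with hembS
  have hCmem : ∀ q, g' q ∈ C := fun q => Finset.orderEmbOfFin_mem C hCcard q
  have hSmem : ∀ p, embS p ∈ S := fun p => Finset.orderEmbOfFin_mem S hS' p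
  have hSneu : ∀ p, embS p ≠ u := fun p h => huS (h ▸ hSmem p)
  have hSnelast : ∀ p : Fin k', ((rho u (embS p) : Fin t) : ℕ) ≠ t - 1 :=
    fun p => rho_ne_last (hSneu p)
  set lastF : Fin t := ⟨t - 1, by omega⟩ with hlastF
  set f' : Fin (k' + 1) → Fin t := Fin.snoc (fun p => rho u (embS p)) lastF with hf'
  have hf'cast : ∀ p : Fin k', f' (Fin.castSucc p) = rho u (embS p) := fun p => by
    rw [hf']; exact Fin.snoc_castSucc _ _ p
  have hf'last : f' (Fin.last k') = lastF := by rw [hf']; exact Fin.snoc_last _ _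
  have hf'inj : Function.Injective f' := by
    intro p q h
    rcases Fin.eq_castSucc_or_eq_last p with ⟨p', rfl⟩ | rfl <;>
      rcases Fin.eq_castSucc_or_eq_last q with ⟨q', rfl⟩ | rfl
    · rw [hf'cast, hf'cast] at h
      exact congrArg _ (embS.injective (rho_inj (hSneu p') (hSneu q') h))
    · rw [hf'cast, hf'last] at h
      exact absurd (congrArg Fin.val h) (hSnelast p')
    · rw [hf'cast, hf'last] at h
      exact absurd (congrArg Fin.val h.symm) (hSnelast q')
    · rfl
  -- q_j : position of column jF
  obtain ⟨qj, hqj⟩ : ∃ qj, g' qj = jF := by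
    have hr := Finset.range_orderEmbOfFin C hCcard
    have : jF ∈ Set.range ⇑g' := by
      rw [hg', hr]
      exact_mod_cast Finset.mem_insert_self jF S
    exact this
  -- the big minor
  set M' := R.submatrix f' (fun q => g' q) with hM'
  have hdetM' : (d : ℤ) ∣ M'.det := hdm ⟨f', hf'inj⟩ g'.toEmbedding
  -- last row entries
  have hlastrow : ∀ q, M' (Fin.last k') q = c (g' q) := by
    intro q
    show R (f' (Fin.last k')) (g' q) = _
    rw [hf'last, hR]
    have : ((lastF : Fin t) : ℕ) = t - 1 := rfl
    rw [if_pos this]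
  -- cofactors
  have hcof : ∀ q : Fin (k' + 1),
      M'.submatrix (Fin.last k').succAbove q.succAbove
        = R.submatrix (fun p => rho u (embS p)) (fun p => g' (q.succAbove p)) := by
    intro q
    ext p pq
    simp only [hM', Matrix.submatrix_apply, Fin.succAbove_last]
    rw [hf'cast p]
  have hdet := Matrix.det_succ_row M' (Fin.last k')
  simp only [hcof, hlastrow] at hdet
  set term : Fin (k' + 1) → ℤ := fun q =>
    (-1) ^ ((Fin.last k' : ℕ) + (q : ℕ)) * c (g' q) *
      (R.submatrix (fun p => rho u (embS p)) (fun p => g' (q.succAbove p))).det with hterm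
  have hdet2 : M'.det = term qj + ∑ q ∈ Finset.univ.erase qj, term q := by
    rw [hdet, ← Finset.add_sum_erase Finset.univ term (Finset.mem_univ qj)]
  -- every other term is divisible by d
  have hother : ∀ q ∈ Finset.univ.erase qj, (d : ℤ) ∣ term q := by
    intro q hq
    have hqne : q ≠ qj := Finset.ne_of_mem_erase hq
    set m := g' q with hm
    have hmC : m ∈ C := hCmem q
    have hmnej : m ≠ jF := by
      intro h; exact hqne (g'.injective (h.trans hqj.symm))
    have hmS : m ∈ S := by
      rcases Finset.mem_insert.mp (hCdef ▸ hmC) with h | h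
      · exact absurd h hmnej
      · exact h
    have hmn : (m : ℕ) ≠ n := fun h => hmnej (Fin.ext h)
    rcases lt_or_gt_of_ne hmn with hlt | hgt
    · -- column index below the run : use induction hypothesis
      have hcols_mem : ∀ p : Fin k', g' (q.succAbove p) ∈ C.erase m := by
        intro p
        refine Finset.mem_erase.mpr ⟨?_, hCmem _⟩
        intro h
        exact Fin.succAbove_ne q p (g'.injective h)
      have hecard : (C.erase m).card = k' := by
        rw [Finset.card_erase_of_mem hmC, hCcard]
        omega
      have hIH : (d : ℤ) ∣ ∏ w ∈ C.erase m, a w := by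
        refine IH (m : ℕ) hlt (C.erase m)
          (by rw [Finset.card_erase_of_mem hmC]; omega) ?_ ?_
        · intro w hw
          refine Finset.mem_erase.mpr ⟨fun h => ?_, ?_⟩
          · rw [h] at hw; omega
          · rw [hCdef]
            exact Finset.mem_insert_of_mem (hbelow w (hw.trans hlt))
        · intro w hw
          have : w = m := Fin.ext hw
          rw [this]
          exact Finset.notMem_erase m C
      have hB3 := B3 hR (fun p => rho u (embS p)) (fun p => g' (q.succAbove p)) hSnelast
      have hprod : ∏ p, a (g' (q.succAbove p)) = ∏ w ∈ C.erase m, a w :=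
        prod_fin_eq_prod_finset (C.erase m) hecard _
          (fun x y h => (Fin.succAbove_right_injective (p := q)) (g'.injective h))
          hcols_mem a
      rw [hterm]
      exact Dvd.dvd.mul_left ((hIH.trans (hprod ▸ hB3))) _
    · -- column index above the run : cofactor vanishes
      have hzero : (R.submatrix (fun p => rho u (embS p))
          (fun p => g' (q.succAbove p))).det = 0 := by
        apply det_zero_aux _
          (Finset.univ.filter fun p : Fin k' => n < ((embS p : Fin t) : ℕ))
          (Finset.univ.filter fun p : Fin k' => n < ((g' (q.succAbove p) : Fin t) : ℕ))
        · -- cardinalities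
          have hβ : (Finset.univ.filter fun p : Fin k' => n < ((embS p : Fin t) : ℕ)).card
              = (S.filter fun w : Fin t => n < (w : ℕ)).card := by
            refine Finset.card_bij (fun p _ => embS p) ?_ ?_ ?_
            · intro p hp
              refine Finset.mem_filter.mpr ⟨hSmem p, (Finset.mem_filter.mp hp).2⟩
            · intro p hp p' hp' h
              exact embS.injective (by simpa using h)
            · intro w hw
              obtain ⟨hwS, hwn⟩ := Finset.mem_filter.mp hw
              have : w ∈ Set.range ⇑embS := by
                rw [hembS, Finset.range_orderEmbOfFin S hS']
                exact_mod_cast hwS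
              obtain ⟨p, hp⟩ := this
              exact ⟨p, Finset.mem_filter.mpr ⟨Finset.mem_univ _, by rw [hp]; exact hwn⟩, hp⟩
          have hγ : (Finset.univ.filter fun p : Fin k' =>
                n < ((g' (q.succAbove p) : Fin t) : ℕ)).card
              = ((C.erase m).filter fun w : Fin t => n < (w : ℕ)).card := by
            refine Finset.card_bij (fun p _ => g' (q.succAbove p)) ?_ ?_ ?_
            · intro p hp
              refine Finset.mem_filter.mpr ⟨?_, (Finset.mem_filter.mp hp).2⟩
              refine Finset.mem_erase.mpr ⟨fun h => ?_, hCmem _⟩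
              exact Fin.succAbove_ne q p (g'.injective h)
            · intro p hp p' hp' h
              exact Fin.succAbove_right_injective (p := q) (g'.injective (by simpa using h))
            · intro w hw
              obtain ⟨hwC, hwn⟩ := Finset.mem_filter.mp hw
              obtain ⟨hwm, hwC'⟩ := Finset.mem_erase.mp hwC
              have : w ∈ Set.range ⇑g' := by
                rw [hg', Finset.range_orderEmbOfFin C hCcard]
                exact_mod_cast hwC'
              obtain ⟨qq, hqq⟩ := this
              have hqqne : qq ≠ q := by
                intro h; rw [h] at hqq; exact hwm (hqq.symm ▸ rfl)
              obtain ⟨p, hp⟩ := Fin.exists_succAbove_eq hqqne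
              refine ⟨p, Finset.mem_filter.mpr ⟨Finset.mem_univ _, ?_⟩,
                (by show g' (q.succAbove p) = w; rw [hp, hqq])⟩
              rw [hp, hqq]; exact hwn
          rw [hβ, hγ]
          have hfe : (C.erase m).filter (fun w : Fin t => n < (w : ℕ))
              = ((S.filter fun w : Fin t => n < (w : ℕ)).erase m) := by
            rw [Finset.filter_erase, hCdef, Finset.filter_insert]
            rw [if_neg (by omega : ¬ n < ((jF : Fin t) : ℕ))]
          have hmf : m ∈ S.filter (fun w : Fin t => n < (w : ℕ)) :=
            Finset.mem_filter.mpr ⟨hmS, hgt⟩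
          rw [hfe, Finset.card_erase_of_mem hmf]
          have : 0 < (S.filter fun w : Fin t => n < (w : ℕ)).card := Finset.card_pos.mpr ⟨m, hmf⟩
          omega
        · -- vanishing entries
          intro p hp q' hq'
          have hw : n < ((embS p : Fin t) : ℕ) := (Finset.mem_filter.mp hp).2
          have hy : ¬ n < ((g' (q.succAbove q') : Fin t) : ℕ) := by
            intro h
            exact hq' (Finset.mem_filter.mpr ⟨Finset.mem_univ _, h⟩)
          push_neg at hy
          show R (rho u (embS p)) (g' (q.succAbove q')) = 0
          have hvw : ((embS p : Fin t) : ℕ) ≠ (u : ℕ) :=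
            fun h => hSneu p (Fin.ext h)
          apply entry_zero hR _ _ (hSnelast p)
          · intro hh
            have hv := congrArg Fin.val hh
            rw [rho_val] at hv
            by_cases cw : ((embS p : Fin t) : ℕ) < (u : ℕ)
            · rw [if_pos cw] at hv; omega
            · rw [if_neg cw] at hv; omega
          · intro hh
            rw [rho_val] at hh
            by_cases cw : ((embS p : Fin t) : ℕ) < (u : ℕ)
            · rw [if_pos cw] at hh; omega
            · rw [if_neg cw] at hh; omega
      rw [hterm]
      simp only [hzero, mul_zero]
      exact dvd_zero _
  have hdvd_sum : (d : ℤ) ∣ ∑ q ∈ Finset.univ.erase qj, term q :=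
    Finset.dvd_sum hother
  have hdvd_termqj : (d : ℤ) ∣ term qj := by
    have : term qj = M'.det - ∑ q ∈ Finset.univ.erase qj, term q := by
      rw [hdet2]; ring
    rw [this]
    exact dvd_sub hdetM' hdvd_sum
  -- identify term qj
  have hcolsj : (fun p => g' (qj.succAbove p)) = fun p => embS p := by
    have hmono : StrictMono fun p => g' (qj.succAbove p) :=
      g'.strictMono.comp (Fin.strictMono_succAbove qj)
    have hmem : ∀ p, g' (qj.succAbove p) ∈ S := by
      intro p
      have h1 : g' (qj.succAbove p) ∈ C := hCmem _
      have h2 : g' (qj.succAbove p) ≠ jF := by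
        intro h
        exact Fin.succAbove_ne qj p (g'.injective (h.trans hqj.symm))
      rcases Finset.mem_insert.mp (hCdef ▸ h1) with h | h
      · exact absurd h h2
      · exact h
    rw [hembS]
    exact Finset.orderEmbOfFin_unique hS' hmem hmono
  obtain ⟨ε, hε, hKL⟩ := KL1 hR S hS' u huS
  have htermqj : term qj =
      ((-1) ^ ((Fin.last k' : ℕ) + (qj : ℕ)) * ε) * (c jF * ∏ w ∈ S, a w) := by
    rw [hterm]
    simp only [hcolsj, hqj]
    rw [hKL]
    ring
  have hcj : (d : ℤ) ∣ c jF * ∏ w ∈ S, a w := by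
    have hη : ((-1 : ℤ) ^ ((Fin.last k' : ℕ) + (qj : ℕ)) * ε = 1)
        ∨ ((-1 : ℤ) ^ ((Fin.last k' : ℕ) + (qj : ℕ)) * ε = -1) := by
      rcases Nat.even_or_odd ((Fin.last k' : ℕ) + (qj : ℕ)) with hpar | hpar <;>
        rcases hε with rfl | rfl <;> [left; right; right; left] <;>
        rw [hpar.neg_one_pow] <;> ring
    rcases hη with h1 | h1 <;> rw [htermqj, h1] at hdvd_termqj
    · simpa using hdvd_termqj
    · rw [neg_one_mul, dvd_neg] at hdvd_termqj
      exact hdvd_termqj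
  -- d divides a jF * ∏ S a via the k-set minor
  have haj : (d : ℤ) ∣ a jF * ∏ w ∈ S, a w := by
    obtain ⟨ε', hε', hKL'⟩ := KL1 hR C hCcard u huC
    have hrowinj : Function.Injective fun p => rho u (C.orderEmbOfFin hCcard p) := by
      intro p q h
      have hne : ∀ r, C.orderEmbOfFin hCcard r ≠ u :=
        fun r hh => huC (hh ▸ Finset.orderEmbOfFin_mem C hCcard r)
      exact (C.orderEmbOfFin hCcard).injective (rho_inj (hne p) (hne q) h)
    have hdvd : (d : ℤ) ∣ (R.submatrix (fun p => rho u (C.orderEmbOfFin hCcard p))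
        (fun p => C.orderEmbOfFin hCcard p)).det :=
      hdm ⟨fun p => rho u (C.orderEmbOfFin hCcard p), hrowinj⟩
        (C.orderEmbOfFin hCcard).toEmbedding
    rw [hKL'] at hdvd
    have hprodC : ∏ w ∈ C, a w = a jF * ∏ w ∈ S, a w := by
      rw [hCdef, Finset.prod_insert hjS]
    rcases hε' with rfl | rfl
    · rw [one_mul] at hdvd; rw [← hprodC]; exact hdvd
    · rw [neg_one_mul, dvd_neg] at hdvd; rw [← hprodC]; exact hdvd
  -- Bezout
  obtain ⟨x, y, hxy⟩ := hac jF
  have : ∏ w ∈ S, a w = x * (a jF * ∏ w ∈ S, a w) + y * (c jF * ∏ w ∈ S, a w) := by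
    calc ∏ w ∈ S, a w = (x * a jF + y * c jF) * ∏ w ∈ S, a w := by rw [hxy, one_mul]
      _ = _ := by ring
  rw [this]
  exact dvd_add (haj.mul_left x) (hcj.mul_left y)


end Main

theorem stmt_11 (t : ℕ) (ht : 1 ≤ t) (a c : Fin t → ℤ)
    (ha : ∀ i, 1 ≤ a i) (hac : ∀ i, IsCoprime (a i) (c i))
    (R : Matrix (Fin t) (Fin t) ℤ)
    (hR : ∀ i j : Fin t, R i j =
      if (i : ℕ) = t - 1 then c j
      else if j = i then a i
      else if (j : ℕ) = (i : ℕ) + 1 then -(a j) else 0) :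
    ∀ k, 1 ≤ k → k ≤ t - 1 →
      ((Finset.univ : Finset ((Fin k ↪ Fin t) × (Fin k ↪ Fin t))).gcd
        (fun p => ((R.submatrix p.1 p.2).det).natAbs)) =
      ((Finset.univ : Finset (Fin t)).powersetCard (k - 1)).gcd
        (fun s => (∏ i ∈ s, a i).natAbs) := by
  intro k hk1 hk2
  apply Nat.dvd_antisymm
  · -- gcd of minors divides gcd of products
    apply Finset.dvd_gcd
    intro S hS
    rw [Finset.mem_powersetCard_univ] at hS
    have h2t : 2 ≤ t := by omega
    have hcne : (Sᶜ).Nonempty := by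
      rw [← Finset.card_pos, Finset.card_compl, Fintype.card_fin, hS]
      omega
    set j0 := (Sᶜ).min' hcne with hj0
    have hbelow : ∀ w : Fin t, (w : ℕ) < (j0 : ℕ) → w ∈ S := by
      intro w hw
      by_contra hns
      have := Finset.min'_le Sᶜ w (Finset.mem_compl.mpr hns)
      rw [← hj0] at this
      exact absurd this (by omega : ¬ j0 ≤ w)
    have hnot : ∀ w : Fin t, (w : ℕ) = (j0 : ℕ) → w ∉ S := by
      intro w hw
      have : w = j0 := Fin.ext hw
      rw [this]
      exact Finset.mem_compl.mp (Finset.min'_mem _ _)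
    exact dvd_natAbs_helper (stepB hR hk1 hk2 ht hac (j0 : ℕ) S hS hbelow hnot)
  · -- gcd of products divides gcd of minors
    apply Finset.dvd_gcd
    intro p _
    exact stepA hR hk1 p.1 p.2
end

section
/- Let a_1,…,a_t and c_1,…,c_t be positive integers with gcd(a_i, c_i) = 1 for all i, and suppose a_1 = a_2 = ⋯ = a_t = a for some a ≥ 1. Let R be the t×t matrix with rows: for i < t, a in position i, −a in position i+1, zeros elsewhere; last row (c_1,…,c_t). Then the Smith normal form of R is diag(1, a, a, …, a, a·S) where S = ∑_{i=1}^t c_i appears scaled in the last entry, i.e., R is equivalent over ℤ to diag(1, a, …, a, a·∑_{i=1}^t c_i). -/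
/-!
Right multiplication by the upper unitriangular all-ones matrix turns the rows `a (eᵢ - eᵢ₊₁)`
into `a eᵢ` and the last row `c` into its partial sums `sⱼ = c₀ + ⋯ + cⱼ`. Since `x a + y c₀ = 1`,
the unimodular operation `[[x, y], [-c₀, a]]` on the first and last rows creates a pivot `1` in
the corner and turns the last row into `a (0, s₁, …, sₜ₋₁)`. Unitriangular row and column
operations then clear everything off the diagonal, leaving `diag(1, a, …, a, a sₜ₋₁)`.
-/

open Matrix Finset

namespace Matrix

variable {ι α : Type*} [Fintype ι] [DecidableEq ι] [CommRing α]

theorem exists_mul_mul_eq_of_mul_mul_eq_mul {P R Q D V : Matrix ι ι α} (hP : IsUnit P.det)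
    (hQ : IsUnit Q.det) (hV : IsUnit V.det) (h : P * R * Q = D * V) :
    ∃ P' Q' : Matrix ι ι α, IsUnit P'.det ∧ IsUnit Q'.det ∧ P' * R * Q' = D :=
  ⟨P, Q * V⁻¹, hP, by rw [det_mul]; exact hQ.mul (isUnit_nonsing_inv_det V hV), by
    rw [← Matrix.mul_assoc, h, Matrix.mul_assoc, mul_nonsing_inv V hV, Matrix.mul_one]⟩

def pairRowOp (i j : ι) (p q r s : α) : Matrix ι ι α :=
  ((1 : Matrix ι ι α).updateRow i (p • Pi.single i 1 + q • Pi.single j 1)).updateRow j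
    (r • Pi.single i 1 + s • Pi.single j 1)

theorem pairRowOp_mul (i j : ι) (p q r s : α) (M : Matrix ι ι α) :
    pairRowOp i j p q r s * M =
      (M.updateRow i (p • M i + q • M j)).updateRow j (r • M i + s • M j) := by
  simp only [pairRowOp, updateRow_mul, Matrix.one_mul, add_vecMul, smul_vecMul, single_one_vecMul]
  rfl

theorem det_one_updateRow_single_swap {i j : ι} (hij : i ≠ j) :
    (((1 : Matrix ι ι α).updateRow j (Pi.single i 1)).updateRow i (Pi.single j 1)).det = -1 := by
  have : ((1 : Matrix ι ι α).updateRow j (Pi.single i 1)).updateRow i (Pi.single j 1) =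
      (Equiv.swap i j).permMatrix α := by
    ext k l
    rcases eq_or_ne k i with rfl | hki
    · simp [Pi.single_apply, eq_comm]
    rcases eq_or_ne k j with rfl | hkj
    · simp [hki, Pi.single_apply, eq_comm]
    · simp [hki, hkj, one_apply, Equiv.swap_apply_of_ne_of_ne hki hkj]
  rw [this, det_permutation, Equiv.Perm.sign_swap hij, Units.val_neg, Units.val_one, Int.cast_neg,
    Int.cast_one]

theorem det_pairRowOp {i j : ι} (hij : i ≠ j) (p q r s : α) :
    (pairRowOp i j p q r s).det = p * s - q * r := by
  have one_row (k : ι) : (1 : Matrix ι ι α) k = Pi.single k 1 :=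
    funext fun _ => one_eq_pi_single
  set A := (1 : Matrix ι ι α).updateRow i (p • Pi.single i 1 + q • Pi.single j 1)
  have hAj : A.updateRow j (Pi.single j 1) = A := by
    rw [← one_row, ← updateRow_ne (M := 1) (b := p • Pi.single i 1 + q • Pi.single j 1)
      hij.symm, updateRow_eq_self]
  have hA : A.det = p := by
    rw [det_updateRow_add, det_updateRow_smul, det_updateRow_smul, ← one_row,
      updateRow_eq_self, det_one, det_zero_of_row_eq hij (by rw [updateRow_self,
        updateRow_ne hij.symm, one_row])]
    ring
  have hAi : (A.updateRow j (Pi.single i 1)).det = -q := by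
    rw [updateRow_comm _ hij, det_updateRow_add, det_updateRow_smul, det_updateRow_smul,
      det_zero_of_row_eq hij (by rw [updateRow_self, updateRow_ne hij.symm, updateRow_self]),
      det_one_updateRow_single_swap hij]
    ring
  rw [pairRowOp, det_updateRow_add, det_updateRow_smul, det_updateRow_smul, hAj, hA, hAi]
  ring

def upperOnes {ι α : Type*} [LinearOrder ι] [One α] [Zero α] : Matrix ι ι α :=
  of fun i j => if i ≤ j then 1 else 0

theorem det_upperOnes {ι α : Type*} [Fintype ι] [DecidableEq ι] [LinearOrder ι] [CommRing α] :
    (upperOnes : Matrix ι ι α).det = 1 := by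
  rw [det_of_isUpperTriangular]
  · simp [upperOnes]
  · intro i j hji
    exact if_neg (not_le.mpr hji)

end Matrix

namespace PolygonFlower

variable {α : Type*} [CommRing α] {n : ℕ}

def flowerMatrix (a : α) (c : Fin (n + 1) → α) : Matrix (Fin (n + 1)) (Fin (n + 1)) α :=
  of fun i j => if i = Fin.last n then c j else if j = i then a
    else if (j : ℕ) = i + 1 then -a else 0

def partialSum (c : Fin (n + 1) → α) (j : Fin (n + 1)) : α := ∑ k ∈ Iic j, c k

theorem partialSum_zero (c : Fin (n + 1) → α) : partialSum c 0 = c 0 := by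
  simp [partialSum, ← bot_eq_zero]

theorem partialSum_last (c : Fin (n + 1) → α) : partialSum c (Fin.last n) = ∑ k, c k := by
  simp [partialSum, ← Fin.top_eq_last]

def arrowMatrix (a : α) (c : Fin (n + 1) → α) : Matrix (Fin (n + 1)) (Fin (n + 1)) α :=
  of fun i j => if i = Fin.last n then partialSum c j else if j = i then a else 0

def pivotedArrowMatrix (y a : α) (c : Fin (n + 1) → α) :
    Matrix (Fin (n + 1)) (Fin (n + 1)) α :=
  of fun i j => if i = 0 then (if j = 0 then 1 else y * partialSum c j)
    else if i = Fin.last n then (if j = 0 then 0 else a * partialSum c j)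
    else if j = i then a else 0

def lastRowReduction (c : Fin (n + 1) → α) : Matrix (Fin (n + 1)) (Fin (n + 1)) α :=
  of fun i j => if j = i then 1 else if i = Fin.last n ∧ j ≠ 0 then -partialSum c j else 0

def firstRowShear (y : α) (c : Fin (n + 1) → α) : Matrix (Fin (n + 1)) (Fin (n + 1)) α :=
  of fun i j => if j = i then 1 else if i = 0 then y * partialSum c j else 0

def smithDiagonal (a : α) (c : Fin (n + 1) → α) (i : Fin (n + 1)) : α :=
  if i = 0 then 1 else if i = Fin.last n then a * ∑ k, c k else a

theorem flowerMatrix_mul_upperOnes (a : α) (c : Fin (n + 1) → α) :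
    flowerMatrix a c * upperOnes = arrowMatrix a c := by
  ext i j
  simp only [mul_apply, flowerMatrix, upperOnes, arrowMatrix, of_apply, mul_ite, mul_one, mul_zero]
  rcases eq_or_ne i (Fin.last n) with rfl | hi
  · simp [partialSum, ← Finset.sum_filter, filter_ge_eq_Iic]
  obtain ⟨i, rfl⟩ := Fin.exists_castSucc_eq.mpr hi
  have hsucc (k : Fin (n + 1)) : (k : ℕ) = i + 1 ↔ k = i.succ := by
    simp [Fin.ext_iff]
  have hlt : i.castSucc < i.succ := Fin.castSucc_lt_succ
  rw [Fintype.sum_eq_add i.castSucc i.succ hlt.ne]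
  · simp only [hi, Fin.val_castSucc, hsucc, hlt.ne',
      ← Fin.castSucc_lt_iff_succ_le, ↓reduceIte]
    rcases lt_trichotomy j i.castSucc with h | rfl | h
    · simp [h.ne, h.not_ge, h.not_gt]
    · simp
    · simp [h, h.ne', h.le]
  · rintro k ⟨hk, hk'⟩
    simp [hi, hsucc, hk, hk']

theorem det_lastRowReduction (c : Fin (n + 1) → α) : (lastRowReduction c).det = 1 := by
  rw [det_of_isLowerTriangular]
  · simp [lastRowReduction]
  · intro i j (hij : i < j)
    have : i ≠ Fin.last n := (hij.trans_le (Fin.le_last j)).ne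
    simp [lastRowReduction, hij.ne', this]

theorem det_firstRowShear (y : α) (c : Fin (n + 1) → α) : (firstRowShear y c).det = 1 := by
  rw [det_of_isUpperTriangular]
  · simp [firstRowShear]
  · intro i j (hji : j < i)
    have : i ≠ 0 := (lt_of_le_of_lt (Fin.zero_le j) hji).ne'
    simp [firstRowShear, hji.ne, this]

theorem pairRowOp_mul_arrowMatrix (hn : n ≠ 0) {x y a : α} {c : Fin (n + 1) → α}
    (hxy : x * a + y * c 0 = 1) :
    pairRowOp 0 (Fin.last n) x y (-c 0) a * arrowMatrix a c = pivotedArrowMatrix y a c := by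
  have h0 : (0 : Fin (n + 1)) ≠ Fin.last n := by simp [Fin.ext_iff, Ne.symm hn]
  rw [pairRowOp_mul]
  ext i j
  rcases eq_or_ne i (Fin.last n) with rfl | hi
  · simp only [arrowMatrix, pivotedArrowMatrix, updateRow_self, Pi.add_apply, Pi.smul_apply,
      smul_eq_mul, of_apply, h0, h0.symm, ↓reduceIte, mul_ite, mul_zero]
    split_ifs with hj
    · rw [hj, partialSum_zero]
      ring
    · ring
  rcases eq_or_ne i 0 with rfl | hi0
  · simp only [arrowMatrix, pivotedArrowMatrix, updateRow_ne h0, updateRow_self, Pi.add_apply,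
      Pi.smul_apply, smul_eq_mul, of_apply, h0, ↓reduceIte, mul_ite, mul_zero]
    split_ifs with hj
    · rw [hj, partialSum_zero, hxy]
    · ring
  simp [hi, hi0, arrowMatrix, pivotedArrowMatrix]

theorem lastRowReduction_mul_pivotedArrowMatrix (hn : n ≠ 0) (y a : α) (c : Fin (n + 1) → α) :
    lastRowReduction c * pivotedArrowMatrix y a c =
      diagonal (smithDiagonal a c) * firstRowShear y c := by
  have h0 : (0 : Fin (n + 1)) ≠ Fin.last n := by simp [Fin.ext_iff, Ne.symm hn]
  ext i j
  rw [diagonal_mul, mul_apply]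
  simp only [lastRowReduction, pivotedArrowMatrix, firstRowShear, smithDiagonal, of_apply]
  rcases eq_or_ne i (Fin.last n) with rfl | hi
  · rw [Finset.sum_congr rfl (g := fun k =>
        (if k = Fin.last n then (if j = 0 then 0 else a * partialSum c j) else 0) +
        (if k = j then (if k ≠ 0 ∧ k ≠ Fin.last n then -(partialSum c k * a) else 0) else 0)),
      sum_add_distrib, sum_ite_eq', sum_ite_eq']
    · rcases eq_or_ne j 0 with rfl | hj0
      · simp [h0, hn]
      rcases eq_or_ne j (Fin.last n) with rfl | hjl
      · simp [hj0, partialSum_last]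
      · simp [hj0, hjl, hn, mul_comm]
    · intro k _
      rcases eq_or_ne k (Fin.last n) with rfl | hk
      · simp [h0.symm]
      rcases eq_or_ne k 0 with rfl | hk0
      · simp [h0, eq_comm]
      · simp [hk, hk0, eq_comm]
  · rw [Fintype.sum_eq_single i (fun k hk => by simp [hk, hi])]
    rcases eq_or_ne i 0 with rfl | hi0
    · simp
    · simp [hi0, hi, eq_comm]

theorem exists_mul_flowerMatrix_mul_eq_diagonal (hn : n ≠ 0) {a : α} {c : Fin (n + 1) → α}
    (hac : IsCoprime a (c 0)) :
    ∃ P Q : Matrix (Fin (n + 1)) (Fin (n + 1)) α, IsUnit P.det ∧ IsUnit Q.det ∧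
      P * flowerMatrix a c * Q = diagonal (smithDiagonal a c) := by
  obtain ⟨x, y, hxy⟩ := hac
  refine exists_mul_mul_eq_of_mul_mul_eq_mul
    (P := lastRowReduction c * pairRowOp 0 (Fin.last n) x y (-c 0) a) (Q := upperOnes)
    (V := firstRowShear y c) ?_ ?_ ?_ ?_
  · rw [det_mul, det_lastRowReduction, det_pairRowOp (by simp [Fin.ext_iff, Ne.symm hn])]
    simp [hxy]
  · simp [det_upperOnes]
  · simp [det_firstRowShear]
  · rw [Matrix.mul_assoc _ (flowerMatrix a c), flowerMatrix_mul_upperOnes, Matrix.mul_assoc,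
      pairRowOp_mul_arrowMatrix hn hxy, lastRowReduction_mul_pivotedArrowMatrix hn]

end PolygonFlower

theorem stmt_19_general (t : ℕ) (ht : 2 ≤ t) (a : ℤ) (c : Fin t → ℤ)
    (hac : ∀ i, IsCoprime a (c i))
    (R : Matrix (Fin t) (Fin t) ℤ)
    (hR : ∀ i j : Fin t, R i j =
      if (i : ℕ) = t - 1 then c j
      else if j = i then a
      else if (j : ℕ) = (i : ℕ) + 1 then -a else 0) :
    ∃ P Q : Matrix (Fin t) (Fin t) ℤ, IsUnit P.det ∧ IsUnit Q.det ∧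
      P * R * Q = Matrix.diagonal (fun i : Fin t =>
        if (i : ℕ) = 0 then 1
        else if (i : ℕ) = t - 1 then a * ∑ l, c l
        else a) := by
  obtain ⟨n, rfl⟩ : ∃ n, t = n + 1 := ⟨t - 1, by omega⟩
  have hR' : R = PolygonFlower.flowerMatrix a c := by
    ext i j
    simp [hR, PolygonFlower.flowerMatrix, Fin.ext_iff]
  have hD : (fun i : Fin (n + 1) => if (i : ℕ) = 0 then 1
      else if (i : ℕ) = n + 1 - 1 then a * ∑ l, c l else a) =
      PolygonFlower.smithDiagonal a c := by
    ext i
    simp only [PolygonFlower.smithDiagonal, Fin.ext_iff, Fin.val_zero, Fin.val_last,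
      Nat.add_sub_cancel]
  rw [hR', hD]
  exact PolygonFlower.exists_mul_flowerMatrix_mul_eq_diagonal (by omega) (hac 0)

theorem stmt_19 (t : ℕ) (ht : 2 ≤ t) (a : ℤ) (ha : 1 ≤ a) (c : Fin t → ℤ)
    (hc : ∀ i, 1 ≤ c i) (hac : ∀ i, IsCoprime a (c i))
    (R : Matrix (Fin t) (Fin t) ℤ)
    (hR : ∀ i j : Fin t, R i j =
      if (i : ℕ) = t - 1 then c j
      else if j = i then a
      else if (j : ℕ) = (i : ℕ) + 1 then -a else 0) :
    ∃ P Q : Matrix (Fin t) (Fin t) ℤ, IsUnit P.det ∧ IsUnit Q.det ∧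
      P * R * Q = Matrix.diagonal (fun i : Fin t =>
        if (i : ℕ) = 0 then 1
        else if (i : ℕ) = t - 1 then a * ∑ l, c l
        else a) :=
  stmt_19_general t ht a c hac R hR
end
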